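/- arXiv:2409.16625 — 2 statements merged into one kernel-verified Lean document; each statement's English description precedes it below -/
import Mathlib

section
/- For an irreducible basic Hitchin pair (∇_h, Φ) on a compact Sasakian 3-fold, if (α,β,γ) solves the adjoint system ∇_hα + [⋆_ξΦ,β] + [Φ,γ] = 0 and [Φ,α] + ⋆_ξ∇_hβ − ∇_hγ = 0, with α ∈ A_B(𝔲(E)), then ∇_h α = 0 and [Φ, α] = 0. -/
open scoped InnerProductSpace

/- Abstract model of the computation in Proposition 4.2.  S, V1, V2 model
   A⁰_B(𝔲(E)), A¹_B(𝔲(E)), A²_B(𝔲(E)) with their L²-inner products on a compact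
   Sasakian 3-fold; nabla = ∇_h, brk = [Φ,·], brkStar = [⋆_ξΦ,·], star1 = ⋆_ξ on
   1-forms, star20 = ⋆_ξ : A²_B ≃ A⁰_B, idE = √−1·Id_E.  The hypotheses encode the
   basic Hitchin equations (F_{∇_h} = Φ∧Φ via hCurv, ∇_hΦ = 0 via hNablaPhi,
   ∇_h⋆_ξΦ = 0 via hNablaStarPhi), the adjoint formulas of Lemma 3.3, the bracket
   identity of Lemma 3.4 and irreducibility.  Conclusion: any solution (α,β,γ) of
   the adjoint system satisfies ∇_hα = 0 and [Φ,α] = 0. -/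
theorem adjoint_system_alpha_parallel
    {S V1 V2 : Type*}
    [NormedAddCommGroup S] [InnerProductSpace ℝ S]
    [NormedAddCommGroup V1] [InnerProductSpace ℝ V1]
    [NormedAddCommGroup V2] [InnerProductSpace ℝ V2]
    (nabla0 : S →ₗ[ℝ] V1) (nabla1 : V1 →ₗ[ℝ] V2)
    (brk0 : S →ₗ[ℝ] V1) (brk1 : V1 →ₗ[ℝ] V2)
    (brkStar0 : S →ₗ[ℝ] V1) (brkStar1 : V1 →ₗ[ℝ] V2)
    (star1 : V1 →ₗ[ℝ] V1) (star20 : V2 ≃ₗ[ℝ] S) (idE : S)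
    (hstar1 : ∀ v, star1 (star1 v) = -v)
    (hiso1 : ∀ v w : V1, ⟪star1 v, star1 w⟫_ℝ = ⟪v, w⟫_ℝ)
    (hbrkstar0 : ∀ f : S, brkStar0 f = star1 (brk0 f))
    (hlem : ∀ v : V1, brkStar1 v = - brk1 (star1 v))
    (hCurv : ∀ f : S, nabla1 (nabla0 f) = brk1 (brk0 f))
    (hNablaPhi : ∀ f : S, nabla1 (brk0 f) = - brk1 (nabla0 f))
    (hNablaStarPhi : ∀ f : S, nabla1 (brkStar0 f) = - brkStar1 (nabla0 f))
    (hadjN : ∀ (f : S) (v : V1), ⟪nabla0 f, v⟫_ℝ = -⟪f, star20 (nabla1 (star1 v))⟫_ℝ)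
    (hadjB : ∀ (f : S) (v : V1), ⟪brk0 f, v⟫_ℝ = -⟪f, star20 (brk1 (star1 v))⟫_ℝ)
    (hirr : ∀ f : S, nabla0 f = 0 → brk0 f = 0 → ∃ c : ℝ, f = c • idE)
    (α β γ : S)
    (h1 : nabla0 α + brkStar0 β + brk0 γ = 0)
    (h2 : brk0 α + star1 (nabla0 β) - nabla0 γ = 0) :
    nabla0 α = 0 ∧ brk0 α = 0 := by
  -- rewrite the equations
  have hA : nabla0 α = -star1 (brk0 β) - brk0 γ := by
    rw [hbrkstar0] at h1
    have := h1
    linear_combination (norm := module) this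
  have hB : brk0 α = nabla0 γ - star1 (nabla0 β) := by
    linear_combination (norm := module) h2
  set A := nabla0 α with hAdef
  set B := brk0 α with hBdef
  -- the four adjoint computations
  have t1 : ⟪star1 (brk0 β), A⟫_ℝ = -⟪β, star20 (brk1 A)⟫_ℝ := by
    have e1 : ⟪star1 (brk0 β), A⟫_ℝ = -⟪brk0 β, star1 A⟫_ℝ := by
      rw [← hiso1 (brk0 β) (star1 A), hstar1, inner_neg_right, neg_neg]
    rw [e1, hadjB β (star1 A), hstar1, map_neg, map_neg, inner_neg_right]
    ring
  have t2 : ⟪brk0 γ, A⟫_ℝ = -⟪γ, star20 (brk1 (star1 A))⟫_ℝ := hadjB γ A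
  have t3 : ⟪nabla0 γ, B⟫_ℝ = -⟪γ, star20 (nabla1 (star1 B))⟫_ℝ := hadjN γ B
  have t4 : ⟪star1 (nabla0 β), B⟫_ℝ = -⟪β, star20 (nabla1 B)⟫_ℝ := by
    have e1 : ⟪star1 (nabla0 β), B⟫_ℝ = -⟪nabla0 β, star1 B⟫_ℝ := by
      rw [← hiso1 (nabla0 β) (star1 B), hstar1, inner_neg_right, neg_neg]
    rw [e1, hadjN β (star1 B), hstar1, map_neg, map_neg, inner_neg_right]
    ring
  -- Hitchin equation consequences
  have k1 : nabla1 B = -brk1 A := hNablaPhi α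
  have k2 : nabla1 (star1 B) = brk1 (star1 A) := by
    have := hNablaStarPhi α
    rw [hbrkstar0, hlem] at this
    simpa using this
  have key : ⟪A, A⟫_ℝ + ⟪B, B⟫_ℝ = 0 := by
    have eA : ⟪A, A⟫_ℝ = -⟪star1 (brk0 β), A⟫_ℝ - ⟪brk0 γ, A⟫_ℝ := by
      nth_rewrite 1 [hA]
      rw [inner_sub_left, inner_neg_left]
    have eB : ⟪B, B⟫_ℝ = ⟪nabla0 γ, B⟫_ℝ - ⟪star1 (nabla0 β), B⟫_ℝ := by
      nth_rewrite 1 [hB]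
      rw [inner_sub_left]
    rw [eA, eB, t1, t2, t3, t4, k1, k2]
    simp only [map_neg, inner_neg_right, neg_neg]
    ring
  have hnA := real_inner_self_nonneg (x := A)
  have hnB := real_inner_self_nonneg (x := B)
  constructor
  · exact inner_self_eq_zero.mp (show ⟪A, A⟫_ℝ = 0 by linarith)
  · exact inner_self_eq_zero.mp (show ⟪B, B⟫_ℝ = 0 by linarith)
end

section
/- Let s be a complex structure on a real vector space W of 1-forms with values in a matrix Lie algebra, acting on pairs. If α = (α₁,α₂) satisfies the linearized basic Hitchin system ∇⋆α₁ + [Φ, ⋆α₂] = 0, ∇α₁ − [Φ,α₂] = 0, ∇α₂ + [α₁,Φ] = 0, ∇⋆α₂ + [α₁,⋆Φ] = 0, then so do Iα = (⋆α₁, −⋆α₂), Jα = (−α₂, α₁), and Kα = (−⋆α₂, −⋆α₁). -/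
/- Linear model of Section 4.3: V1 models the basic 𝔲(E)-valued 1-forms, V2 the
   2-forms; nabla = ∇_h, brk = [Φ,·] (graded bracket of 1-forms, so [α,Φ] = [Φ,α]),
   brkStar = [⋆_ξΦ,·], s = ⋆_ξ with s² = −Id, and the bracket identity
   [⋆A,B] = −[A,⋆B] gives brkStar v = −brk (s v). -/

variable {V1 V2 : Type*} [AddCommGroup V1] [Module ℝ V1]
  [AddCommGroup V2] [Module ℝ V2]

/-- The linearized basic Hitchin system (the equations characterizing
ker D₁* ∩ ker D₂ ≅ ℍ¹) for a pair α = (α₁, α₂). -/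
def LinearizedHitchin (nabla brk brkStar : V1 →ₗ[ℝ] V2) (s : V1 →ₗ[ℝ] V1)
    (α : V1 × V1) : Prop :=
  nabla (s α.1) + brk (s α.2) = 0 ∧
  nabla α.1 - brk α.2 = 0 ∧
  nabla α.2 + brk α.1 = 0 ∧
  nabla (s α.2) + brkStar α.1 = 0

/-- I, J, K preserve the harmonic space ℍ¹: if α = (α₁,α₂) solves the linearized
basic Hitchin system, so do Iα = (⋆α₁, −⋆α₂), Jα = (−α₂, α₁), Kα = (−⋆α₂, −⋆α₁). -/
theorem IJK_preserve_harmonic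
    (nabla brk brkStar : V1 →ₗ[ℝ] V2) (s : V1 →ₗ[ℝ] V1)
    (hs : ∀ v, s (s v) = -v)
    (hrel : ∀ v : V1, brkStar v = - brk (s v))
    (α : V1 × V1)
    (hα : LinearizedHitchin nabla brk brkStar s α) :
    LinearizedHitchin nabla brk brkStar s (s α.1, -(s α.2)) ∧
    LinearizedHitchin nabla brk brkStar s (-α.2, α.1) ∧
    LinearizedHitchin nabla brk brkStar s (-(s α.2), -(s α.1)) := by
  obtain ⟨e1, e2, e3, e4⟩ := hα
  rw [hrel] at e4
  refine ⟨⟨?_, ?_, ?_, ?_⟩, ⟨?_, ?_, ?_, ?_⟩, ⟨?_, ?_, ?_, ?_⟩⟩ <;>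
    simp only [LinearizedHitchin, hs, hrel, map_neg, neg_neg] <;>
    [ (linear_combination (norm := module) -e2);
      (linear_combination (norm := module) e1);
      (linear_combination (norm := module) -e4);
      (linear_combination (norm := module) e3);
      (linear_combination (norm := module) -e4);
      (linear_combination (norm := module) -e3);
      (linear_combination (norm := module) e2);
      (linear_combination (norm := module) e1);
      (linear_combination (norm := module) e3);
      (linear_combination (norm := module) -e4);
      (linear_combination (norm := module) -e1);
      (linear_combination (norm := module) e2)]
end
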